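/- Any probability distribution r on the QPSK set {sqrt(P/2)(±1±i)} that factorizes as a product over the sign of the real part and the sign of the imaginary part (i.e., r(s1, s2) = r1(s1)*r2(s2) for signs s1, s2, with all probabilities positive) can be written as a tilt of the uniform distribution of the form r(x) proportional to exp(2*alpha*Re(x) - 2*beta*Im(x)) for suitable real alpha, beta; explicitly alpha = artanh(E_r[Re X]*sqrt(2/P))/sqrt(2P) and beta = -artanh(E_r[Im X]*sqrt(2/P))/sqrt(2P). -/

import Mathlib

/-! A positive distribution `p` on the signs `±1` is the logistic tilt `p s ∝ exp (t s)` with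
`t = artanh (p 1 - p (-1))`, since `exp (2 t) = p 1 / p (-1)`. A product of two such
distributions is therefore the tilt `exp (t₁ s₁ + t₂ s₂)`, and the QPSK parameters `α`, `β`
are `t₁`, `-t₂` rescaled by the amplitude `√(P/2)`. -/

open Real Finset

/-- Inverse hyperbolic tangent. -/
noncomputable def artanh (m : ℝ) : ℝ := (1 / 2) * Real.log ((1 + m) / (1 - m))

lemma exp_two_mul_artanh {m : ℝ} (hm : |m| < 1) :
    Real.exp (2 * _root_.artanh m) = (1 + m) / (1 - m) := by
  obtain ⟨hm₁, hm₂⟩ := abs_lt.1 hm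
  rw [_root_.artanh, ← mul_assoc, mul_one_div_cancel two_ne_zero, one_mul,
    Real.exp_log (div_pos (by linarith) (by linarith))]

lemma exp_two_mul_artanh_sub {a b : ℝ} (ha : 0 < a) (hb : 0 < b) (hab : a + b = 1) :
    Real.exp (2 * _root_.artanh (a - b)) = a / b := by
  rw [exp_two_mul_artanh (abs_lt.2 ⟨by linarith, by linarith⟩),
    show 1 + (a - b) = 2 * a by linarith, show 1 - (a - b) = 2 * b by linarith,
    mul_div_mul_left _ _ two_ne_zero]

lemma eq_exp_artanh_mul_div (p : ℝ → ℝ) (h₁ : 0 < p 1) (h₂ : 0 < p (-1))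
    (hsum : p 1 + p (-1) = 1) {s : ℝ} (hs : s = 1 ∨ s = -1) :
    p s = Real.exp (_root_.artanh (p 1 - p (-1)) * s) /
      (Real.exp (_root_.artanh (p 1 - p (-1))) + Real.exp (-_root_.artanh (p 1 - p (-1)))) := by
  set t := _root_.artanh (p 1 - p (-1))
  have hsq : Real.exp t ^ 2 * p (-1) = p 1 := by
    rw [← Real.exp_nat_mul, Nat.cast_ofNat, exp_two_mul_artanh_sub h₁ h₂ hsum,
      div_mul_cancel₀ _ h₂.ne']
  rcases hs with rfl | rfl
  · rw [mul_one, Real.exp_neg]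
    field_simp
    linear_combination Real.exp t ^ 2 * hsum - hsq
  · rw [mul_neg_one, Real.exp_neg]
    field_simp
    linear_combination hsq + hsum

lemma sqrt_div_two_mul_sqrt_two_div {P : ℝ} (hP : 0 < P) :
    Real.sqrt (P / 2) * Real.sqrt (2 / P) = 1 := by
  rw [← Real.sqrt_mul (by positivity), div_mul_div_comm, mul_comm P, div_self (by positivity),
    Real.sqrt_one]

lemma sqrt_two_mul_eq_two_mul_sqrt_div_two (P : ℝ) :
    Real.sqrt (2 * P) = 2 * Real.sqrt (P / 2) := by
  rw [show 2 * P = 2 ^ 2 * (P / 2) by ring, Real.sqrt_mul (by positivity),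
    Real.sqrt_sq zero_le_two]

/-- Any product-form positive distribution `r(s₁,s₂) = r₁(s₁) r₂(s₂)` on the
QPSK set `{√(P/2)(±1 ± i)}` is an exponential tilt of the uniform
distribution of the form `r(x) ∝ exp(2α Re x − 2β Im x)`, with
`α = artanh(E_r[Re X]·√(2/P))/√(2P)` and `β = −artanh(E_r[Im X]·√(2/P))/√(2P)`. -/
theorem qpsk_product_posterior_is_tilt (P : ℝ) (hP : 0 < P)
    (r1 r2 : ℝ → ℝ)
    (hr1pos : 0 < r1 1 ∧ 0 < r1 (-1)) (hr2pos : 0 < r2 1 ∧ 0 < r2 (-1))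
    (hr1sum : r1 1 + r1 (-1) = 1) (hr2sum : r2 1 + r2 (-1) = 1) :
    (let Rmean : ℝ := Real.sqrt (P / 2) * (r1 1 - r1 (-1))
     let Imean : ℝ := Real.sqrt (P / 2) * (r2 1 - r2 (-1))
     let α : ℝ := _root_.artanh (Rmean * Real.sqrt (2 / P)) / Real.sqrt (2 * P)
     let β : ℝ := -(_root_.artanh (Imean * Real.sqrt (2 / P)) / Real.sqrt (2 * P))
     let w : ℝ → ℝ → ℝ := fun s1 s2 =>
       Real.exp (2 * α * (Real.sqrt (P / 2) * s1) - 2 * β * (Real.sqrt (P / 2) * s2))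
     let Z : ℝ := w 1 1 + w 1 (-1) + w (-1) 1 + w (-1) (-1)
     ∀ s1 s2 : ℝ, (s1 = 1 ∨ s1 = -1) → (s2 = 1 ∨ s2 = -1) →
       r1 s1 * r2 s2 = w s1 s2 / Z) := by
  intro Rmean Imean α β w Z s1 s2 hs1 hs2
  set t₁ := _root_.artanh (r1 1 - r1 (-1))
  set t₂ := _root_.artanh (r2 1 - r2 (-1))
  have hrescale : ∀ m : ℝ, 2 * (_root_.artanh (Real.sqrt (P / 2) * m * Real.sqrt (2 / P)) /
      Real.sqrt (2 * P)) * Real.sqrt (P / 2) = _root_.artanh m := fun m => by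
    have hA : Real.sqrt (P / 2) ≠ 0 := (Real.sqrt_pos.2 (half_pos hP)).ne'
    rw [mul_right_comm _ m, sqrt_div_two_mul_sqrt_two_div hP, one_mul,
      sqrt_two_mul_eq_two_mul_sqrt_div_two]
    field_simp
  have hα : 2 * α * Real.sqrt (P / 2) = t₁ := hrescale _
  have hβ : 2 * β * Real.sqrt (P / 2) = -t₂ := by
    linear_combination -hrescale (r2 1 - r2 (-1))
  have hw : ∀ u v, w u v = Real.exp (t₁ * u) * Real.exp (t₂ * v) := fun u v => by
    rw [← Real.exp_add]
    exact congrArg Real.exp (by linear_combination u * hα - v * hβ)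
  have hZ : Z = (Real.exp t₁ + Real.exp (-t₁)) * (Real.exp t₂ + Real.exp (-t₂)) := by
    simp only [Z, hw, mul_one, mul_neg_one]
    ring
  rw [eq_exp_artanh_mul_div r1 hr1pos.1 hr1pos.2 hr1sum hs1,
    eq_exp_artanh_mul_div r2 hr2pos.1 hr2pos.2 hr2sum hs2, hw, hZ, mul_div_mul_comm]
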